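/- Let $k, r$ be positive integers with $k \geq 2$ and $r \leq k$, let $h \geq r + 2$ be an integer, and let $A$ be a set of integers with $|A| = k$. If $|h^{(\geq r)}A| = h(k-1) - r(r-1) + 1$, then $A$ is an arithmetic progression of integers. -/

import Mathlib

open Pointwise

/-- The generalized sumset `h^{(≥ r)}A`: elements expressible as a sum of `h` elements of `A`
(with repetition allowed) using at least `r` distinct elements of `A`. -/
def genSumset {G : Type*} [AddCommGroup G] [DecidableEq G] (h r : ℕ) (A : Finset G) : Set G :=
  {x | ∃ s : Multiset G, s.toFinset ⊆ A ∧ Multiset.card s = h ∧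
      r ≤ s.toFinset.card ∧ s.sum = x}

/-- The `h`-fold sumset `hA`: sums of `h` elements of `A` with repetition allowed
(with the convention `0A = {0}`). -/
def hfoldSumset {G : Type*} [AddCommGroup G] [DecidableEq G] (h : ℕ) (A : Finset G) : Set G :=
  {x | ∃ s : Multiset G, s.toFinset ⊆ A ∧ Multiset.card s = h ∧ s.sum = x}

/-- The `h`-fold restricted sumset `h^A`: sums of `h` pairwise distinct elements of `A`
(with the convention `0^A = {0}`). -/
def restrictedSumset {G : Type*} [AddCommGroup G] [DecidableEq G] (r : ℕ) (A : Finset G) : Set G :=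
  {x | ∃ s : Finset G, s ⊆ A ∧ s.card = r ∧ ∑ a ∈ s, a = x}

/-! The generalized sumset splits as `h^{(≥ r)}A = r^A + (h - r)A`. In an ordered group,
Cauchy–Davenport `|X + Y| ≥ |X| + |Y| - 1` together with `|r^A| ≥ r(k - r) + 1` gives
`|h^{(≥ r)}A| ≥ r(k - r) + (h - r - 2)(k - 1) + |2A|`, so the extremal cardinality forces
`|2A| ≤ 2k - 1`. Then the `2k - 1` sums `a₀ + a₀ < a₀ + a₁ < a₁ + a₁ < ⋯` exhaust `2A`, so
`a_{i-1} + a_{i+1}`, lying strictly between `a_{i-1} + a_i` and `a_i + a_{i+1}`, equals `2aᵢ`. -/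

open Finset

section Sumsets

variable {G : Type*} [AddCommGroup G] [DecidableEq G]

theorem hfoldSumset_zero (A : Finset G) : hfoldSumset 0 A = {0} := by
  ext x
  simp [hfoldSumset, eq_comm]

theorem hfoldSumset_succ (n : ℕ) (A : Finset G) :
    hfoldSumset (n + 1) A = (A : Set G) + hfoldSumset n A := by
  ext x
  simp only [hfoldSumset, Set.mem_add, Set.mem_ofPred_eq, Finset.mem_coe]
  constructor
  · rintro ⟨s, hsA, hs, rfl⟩
    obtain ⟨a, ha⟩ : ∃ a, a ∈ s := Multiset.card_pos_iff_exists_mem.1 (by omega)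
    obtain ⟨t, rfl⟩ := Multiset.exists_cons_of_mem ha
    refine ⟨a, hsA (by simp), t.sum, ⟨t, ?_, by simpa using hs, rfl⟩, by simp⟩
    exact (Multiset.toFinset_subset.2 (Multiset.subset_cons t a)).trans hsA
  · rintro ⟨a, ha, _, ⟨t, htA, ht, rfl⟩, rfl⟩
    refine ⟨a ::ₘ t, ?_, by simp [ht], by simp⟩
    simpa [Finset.insert_subset_iff] using ⟨ha, htA⟩

theorem hfoldSumset_eq_coe_nsmul (n : ℕ) (A : Finset G) : hfoldSumset n A = ↑(n • A) := by
  induction n with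
  | zero => rw [hfoldSumset_zero, zero_nsmul, coe_zero, Set.singleton_zero]
  | succ n ih => rw [hfoldSumset_succ, ih, succ_nsmul', coe_add]

theorem restrictedSumset_eq_coe_image (r : ℕ) (A : Finset G) :
    restrictedSumset r A = ↑((A.powersetCard r).image fun s => ∑ x ∈ s, x) := by
  ext x
  simp [restrictedSumset, and_assoc]

theorem genSumset_eq_restrictedSumset_add_hfoldSumset {h r : ℕ} (hrh : r ≤ h) (A : Finset G) :
    genSumset h r A = restrictedSumset r A + hfoldSumset (h - r) A := by
  ext x
  simp only [genSumset, restrictedSumset, hfoldSumset, Set.mem_add, Set.mem_ofPred_eq]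
  constructor
  · rintro ⟨s, hsA, hs, hrs, rfl⟩
    obtain ⟨u, hus, hu⟩ := exists_subset_card_eq hrs
    have hle : u.val ≤ s :=
      (val_le_iff_val_subset.2 fun y hy => by simpa using hus hy).trans (Multiset.dedup_le s)
    refine ⟨∑ x ∈ u, x, ⟨u, hus.trans hsA, hu, rfl⟩,
      (s - u.val).sum, ⟨s - u.val, ?_, ?_, rfl⟩, ?_⟩
    · exact (Multiset.toFinset_subset.2 (Multiset.subset_of_le (Multiset.sub_le_self _ _))).trans
        hsA
    · rw [Multiset.card_sub hle, hs, card_val, hu]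
    · rw [sum_eq_multiset_sum, Multiset.map_id', ← Multiset.sum_add, add_tsub_cancel_of_le hle]
  · rintro ⟨_, ⟨u, huA, hu, rfl⟩, _, ⟨t, htA, ht, rfl⟩, rfl⟩
    refine ⟨u.val + t, ?_, ?_, ?_, ?_⟩
    · simpa [Multiset.toFinset_add] using union_subset huA htA
    · simp [ht, hu, hrh]
    · exact hu ▸ card_le_card (by simp [Multiset.toFinset_add])
    · rw [Multiset.sum_add, Finset.sum_eq_multiset_sum, Multiset.map_id']

end Sumsets

section Ordered

variable {α : Type*} [AddCommMonoid α] [LinearOrder α] [IsOrderedCancelAddMonoid α]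

theorem Finset.Nonempty.le_card_nsmul {A : Finset α} (hA : A.Nonempty) (n : ℕ) :
    n * (#A - 1) + 1 ≤ #(n • A) := by
  induction n with
  | zero => simp
  | succ n ih =>
    have hCD := cauchy_davenport_add_of_linearOrder_isCancelAdd hA (hA.nsmul (n := n))
    have hA₁ := hA.card_pos
    rw [succ_nsmul', Nat.succ_mul]
    refine le_trans ?_ hCD
    omega

theorem le_card_image_sum_powersetCard {r : ℕ} {A : Finset α} (hr : r ≤ #A) :
    r * (#A - r) + 1 ≤ #((A.powersetCard r).image fun s => ∑ x ∈ s, x) := by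
  induction A using Finset.induction_on_max with
  | empty => simp_all
  | insert a s has ih =>
    have has' : a ∉ s := fun h => lt_irrefl a (has a h)
    rw [card_insert_of_notMem has'] at hr ⊢
    obtain hr | hrs := hr.eq_or_lt
    · rw [hr, Nat.sub_self, mul_zero, zero_add, Nat.one_le_iff_ne_zero, ← pos_iff_ne_zero,
        card_pos, image_nonempty, powersetCard_nonempty, card_insert_of_notMem has']
    replace hrs : r ≤ #s := Nat.lt_succ_iff.1 hrs
    obtain ⟨T, hT, hTmax⟩ := exists_max_image (s.powersetCard r) (fun u => ∑ x ∈ u, x)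
      (powersetCard_nonempty.2 hrs)
    rw [mem_powersetCard] at hT
    -- Swapping one element of the maximal `T` for `a` yields `r` new, larger sums.
    set N := T.image fun t => a + ∑ x ∈ T.erase t, x
    have hsum_erase (t : α) (ht : t ∈ T) : t + ∑ x ∈ T.erase t, x = ∑ x ∈ T, x :=
      add_sum_erase T id ht
    have hN : #N = r := by
      rw [card_image_of_injOn, hT.2]
      intro t ht t' ht' htt'
      have := (hsum_erase t ht).trans (hsum_erase t' ht').symm
      simp only at htt'
      rw [add_left_cancel htt'] at this
      exact add_right_cancel this
    have hN_gt : ∀ y ∈ N, ∑ x ∈ T, x < y := by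
      simp only [N, mem_image]
      rintro _ ⟨t, ht, rfl⟩
      rw [← hsum_erase t ht]
      gcongr
      exact has t (hT.1 ht)
    have hdisj : Disjoint ((s.powersetCard r).image fun u => ∑ x ∈ u, x) N := by
      rw [disjoint_left]
      simp only [mem_image]
      rintro _ ⟨u, hu, rfl⟩ hN
      exact (hTmax u hu).not_gt (hN_gt _ hN)
    have hsub : (s.powersetCard r).image (fun u => ∑ x ∈ u, x) ∪ N ⊆
        ((insert a s).powersetCard r).image fun u => ∑ x ∈ u, x := by
      refine union_subset (image_subset_image (powersetCard_mono (subset_insert a s))) ?_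
      simp only [N, subset_iff, mem_image]
      rintro _ ⟨t, ht, rfl⟩
      have haT : a ∉ T.erase t := fun h => has' (hT.1 (mem_of_mem_erase h))
      refine ⟨insert a (T.erase t), ?_, sum_insert haT⟩
      rw [mem_powersetCard, card_insert_of_notMem haT, card_erase_of_mem ht, hT.2]
      exact ⟨insert_subset_insert a ((erase_subset t T).trans hT.1),
        Nat.sub_add_cancel (hT.2 ▸ card_pos.2 ⟨t, ht⟩)⟩
    calc r * (#s + 1 - r) + 1 = r * (#s - r) + 1 + r := by
          rw [Nat.sub_add_comm hrs, Nat.mul_succ]; ring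
      _ ≤ #((s.powersetCard r).image fun u => ∑ x ∈ u, x) + #N := by
          rw [hN]; exact Nat.add_le_add_right (ih hrs) r
      _ = _ := (card_union_of_disjoint hdisj).symm
      _ ≤ _ := card_le_card hsub

end Ordered

section OrderedGroup

variable {G : Type*} [AddCommGroup G] [LinearOrder G] [IsOrderedAddMonoid G]

theorem le_ncard_genSumset {h r : ℕ} {A : Finset G} (hA : A.Nonempty) (hrk : r ≤ #A)
    (hrh : r + 2 ≤ h) :
    r * (#A - r) + (h - r - 2) * (#A - 1) + #(A + A) ≤ (genSumset h r A).ncard := by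
  set R := (A.powersetCard r).image fun s => ∑ x ∈ s, x
  have hR : r * (#A - r) + 1 ≤ #R := le_card_image_sum_powersetCard hrk
  have hH : (h - r - 2) * (#A - 1) + #(A + A) ≤ #((h - r) • A) := by
    set m := h - r - 2
    have hsmall := hA.le_card_nsmul m
    have hCD := cauchy_davenport_add_of_linearOrder_isCancelAdd (hA.nsmul (n := m)) (hA.add hA)
    rw [show h - r = m + 2 by omega, add_nsmul, two_nsmul]
    refine le_trans ?_ hCD
    omega
  have hCD := cauchy_davenport_add_of_linearOrder_isCancelAdd (card_pos.1 (by omega : 0 < #R))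
    (hA.nsmul (n := h - r))
  rw [genSumset_eq_restrictedSumset_add_hfoldSumset (by omega), restrictedSumset_eq_coe_image,
    hfoldSumset_eq_coe_nsmul, ← coe_add, Set.ncard_coe_finset]
  refine le_trans ?_ hCD
  omega

end OrderedGroup

section Freiman

theorem Finset.exists_strictMonoOn_eq_image_range {A : Finset ℤ} {k : ℕ} (hA : #A = k) :
    ∃ a : ℕ → ℤ, StrictMonoOn a (Set.Iio k) ∧ A = (range k).image a := by
  set e := A.orderEmbOfFin hA
  refine ⟨fun i => if hi : i < k then e ⟨i, hi⟩ else 0, ?_, ?_⟩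
  · intro i hi j hj hij
    simp only [Set.mem_Iio] at hi hj
    simpa [hi, hj] using hij
  · ext x
    rw [← mem_coe, ← A.range_orderEmbOfFin hA]
    simp only [Set.mem_range, mem_image, mem_range]
    constructor
    · rintro ⟨i, rfl⟩
      exact ⟨i, i.2, by simp [e]⟩
    · rintro ⟨i, hi, rfl⟩
      exact ⟨⟨i, hi⟩, by simp [hi, e]⟩

def stairSum (a : ℕ → ℤ) (t : ℕ) : ℤ := a (t / 2) + a ((t + 1) / 2)

variable {a : ℕ → ℤ} {k : ℕ}

@[simp]
theorem stairSum_two_mul (i : ℕ) : stairSum a (2 * i) = a i + a i := by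
  simp only [stairSum, show 2 * i / 2 = i by omega, show (2 * i + 1) / 2 = i by omega]

@[simp]
theorem stairSum_two_mul_add_one (i : ℕ) : stairSum a (2 * i + 1) = a i + a (i + 1) := by
  simp only [stairSum, show (2 * i + 1) / 2 = i by omega, show (2 * i + 1 + 1) / 2 = i + 1 by omega]

theorem strictMonoOn_stairSum (ha : StrictMonoOn a (Set.Iio k)) :
    StrictMonoOn (stairSum a) (Set.Iic (2 * k - 2)) := by
  refine strictMonoOn_Iic_of_lt_succ fun t ht => ?_
  have hstep (i : ℕ) (hi : i + 1 < k) : a i < a (i + 1) :=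
    ha (Set.mem_Iio.2 (by omega)) (Set.mem_Iio.2 hi) i.lt_succ_self
  obtain ⟨i, rfl | rfl⟩ := Nat.even_or_odd' t
  · rw [Order.succ_eq_add_one, stairSum_two_mul, stairSum_two_mul_add_one]
    linarith [hstep i (by omega)]
  · rw [Order.succ_eq_add_one, show 2 * i + 1 + 1 = 2 * (i + 1) by ring, stairSum_two_mul,
      stairSum_two_mul_add_one]
    linarith [hstep i (by omega)]

theorem add_add_two_eq_of_card_add_self_le (ha : StrictMonoOn a (Set.Iio k))
    (hAA : #((range k).image a + (range k).image a) ≤ 2 * k - 1) {i : ℕ} (hi : i + 2 < k) :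
    a i + a (i + 2) = 2 * a (i + 1) := by
  set A := (range k).image a
  have hc := strictMonoOn_stairSum ha
  have hmem (j : ℕ) (hj : j < k) : a j ∈ A := mem_image_of_mem a (mem_range.2 hj)
  have hlt (j₁ j₂ : ℕ) (h : j₁ < j₂) (hj₂ : j₂ < k) : a j₁ < a j₂ :=
    ha (Set.mem_Iio.2 (by omega)) (Set.mem_Iio.2 hj₂) h
  have hstair_sub : (range (2 * k - 1)).image (stairSum a) ⊆ A + A := by
    simp only [subset_iff, mem_image, mem_range]
    rintro _ ⟨t, ht, rfl⟩
    exact add_mem_add (hmem _ (by omega)) (hmem _ (by omega))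
  have hstair_card : #((range (2 * k - 1)).image (stairSum a)) = 2 * k - 1 := by
    rw [card_image_of_injOn, card_range]
    refine hc.injOn.mono fun t ht => Set.mem_Iic.2 ?_
    rw [coe_range, Set.mem_Iio] at ht
    omega
  have hAA_eq : A + A = (range (2 * k - 1)).image (stairSum a) :=
    (eq_of_subset_of_card_le hstair_sub (by rwa [hstair_card])).symm
  obtain ⟨t, ht, hct⟩ :=
    mem_image.1 <| hAA_eq ▸ add_mem_add (hmem i (by omega)) (hmem (i + 2) hi)
  rw [mem_range] at ht
  have hlower : stairSum a (2 * i + 1) < stairSum a t := by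
    rw [hct, stairSum_two_mul_add_one]
    linarith [hlt (i + 1) (i + 2) (by omega) hi]
  have hupper : stairSum a t < stairSum a (2 * (i + 1) + 1) := by
    rw [hct, stairSum_two_mul_add_one]
    linarith [hlt i (i + 1) (by omega) (by omega)]
  rw [hc.lt_iff_lt (Set.mem_Iic.2 (by omega)) (Set.mem_Iic.2 (by omega))] at hlower hupper
  obtain rfl : t = 2 * (i + 1) := by omega
  rw [stairSum_two_mul] at hct
  linarith

theorem eq_add_mul_of_add_add_two_eq (h : ∀ i, i + 2 < k → a i + a (i + 2) = 2 * a (i + 1)) :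
    ∀ i < k, a i = a 0 + i * (a 1 - a 0) := by
  intro i
  induction i using Nat.twoStepInduction with
  | zero => simp
  | one => simp
  | more n ih₀ ih₁ =>
    intro hn
    have hrec := h n hn
    rw [ih₀ (by omega), ih₁ (by omega)] at hrec
    push_cast at hrec ⊢
    linarith

theorem exists_eq_image_arithProg_of_card_add_self_le {A : Finset ℤ} (hk : 2 ≤ k)
    (hA : #A = k) (hAA : #(A + A) ≤ 2 * k - 1) :
    ∃ a d : ℤ, 1 ≤ d ∧ A = (range k).image fun i : ℕ => a + i * d := by
  obtain ⟨a, ha, rfl⟩ := A.exists_strictMonoOn_eq_image_range hA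
  have h01 : a 0 < a 1 := ha (Set.mem_Iio.2 (by omega)) (Set.mem_Iio.2 (by omega)) zero_lt_one
  refine ⟨a 0, a 1 - a 0, by omega, image_congr fun i hi => ?_⟩
  exact eq_add_mul_of_add_add_two_eq (a := a)
    (fun j hj => add_add_two_eq_of_card_add_self_le ha hAA hj) i (mem_range.1 hi)

end Freiman

theorem genSumset_inverse_int_general (k r : ℕ) (hk : 2 ≤ k) (hrk : r ≤ k)
    (h : ℕ) (hh : r + 2 ≤ h) (A : Finset ℤ) (hA : A.card = k)
    (hcard : (genSumset h r A).ncard = h * (k - 1) - r * (r - 1) + 1) :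
    ∃ a d : ℤ, 1 ≤ d ∧
      A = Finset.image (fun i : ℕ => a + (i : ℤ) * d) (Finset.range k) := by
  have hbound := le_ncard_genSumset (card_pos.1 (by omega)) (hA ▸ hrk) hh
  rw [hcard, hA] at hbound
  have hr_split : r * (r - 1) + r * (k - r) = r * (k - 1) := by
    rcases Nat.eq_zero_or_pos r with rfl | hr
    · simp
    · rw [← mul_add]; congr 1; omega
  have hh_split : r * (k - 1) + (h - r - 2) * (k - 1) + 2 * (k - 1) = h * (k - 1) := by
    rw [← add_mul, ← add_mul]; congr 1; omega
  exact exists_eq_image_arithProg_of_card_add_self_le hk hA (by omega)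

theorem genSumset_inverse_int (k r : ℕ) (hk : 2 ≤ k) (hr : 1 ≤ r) (hrk : r ≤ k)
    (h : ℕ) (hh : r + 2 ≤ h) (A : Finset ℤ) (hA : A.card = k)
    (hcard : (genSumset h r A).ncard = h * (k - 1) - r * (r - 1) + 1) :
    ∃ a d : ℤ, 1 ≤ d ∧
      A = Finset.image (fun i : ℕ => a + (i : ℤ) * d) (Finset.range k) :=
  genSumset_inverse_int_general k r hk hrk h hh A hA hcard
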